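/- The projectors P = Σ_{j=1}^d |e_j⟩⟨e_j| ⊗ |e_j⟩⟨e_j| and Q = Σ_{α=1}^d |â_α⟩⟨â_α| ⊗ |ψ_α⟩⟨ψ_α| satisfy PQP = |ψ⟩⟨ψ|, so the sandwiched operator PQP is itself an exact projector onto the target state ψ. -/
import Mathlib


open Matrix Kronecker
open scoped BigOperators ComplexOrder

noncomputable section

/-- Standard basis vector `e_j` of `ℂ^d`. -/
def eVec (d : ℕ) (j : Fin d) : Fin d → ℂ := fun k => if k = j then 1 else 0

/-- Elementary tensor of two vectors in `ℂ^d`. -/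
def tensorVec {d : ℕ} (v w : Fin d → ℂ) : Fin d × Fin d → ℂ := fun p => v p.1 * w p.2

/-- Outer product `|v⟩⟨w|`. -/
def outer {n : Type*} (v w : n → ℂ) : Matrix n n ℂ := Matrix.vecMulVec v (star w)

/-- Conjugate (mutually unbiased) basis vectors `â_α`. -/
def ahat (d : ℕ) (phi : Fin d → Fin d → ℝ) (α : Fin d) : Fin d → ℂ :=
  fun j => ((1 / Real.sqrt d : ℝ) : ℂ) * Complex.exp (Complex.I * (phi j α : ℂ))

/-- The unit vectors `ψ_α = Σ_j √λ_j e^{-iφ(j,α)} e_j`. -/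
def psiAlpha (d : ℕ) (lam : Fin d → ℝ) (phi : Fin d → Fin d → ℝ) (α : Fin d) : Fin d → ℂ :=
  fun j => ((Real.sqrt (lam j) : ℝ) : ℂ) * Complex.exp (-Complex.I * (phi j α : ℂ))

/-- The Schmidt-form state `ψ = Σ_j √λ_j e_j ⊗ e_j` in `ℂ^d ⊗ ℂ^d`. -/
def psiVec (d : ℕ) (lam : Fin d → ℝ) : Fin d × Fin d → ℂ :=
  ∑ j, ((Real.sqrt (lam j) : ℝ) : ℂ) • tensorVec (eVec d j) (eVec d j)

/-- The projector `P = Σ_j |e_j⟩⟨e_j| ⊗ |e_j⟩⟨e_j|`. -/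
def Pop (d : ℕ) : Matrix (Fin d × Fin d) (Fin d × Fin d) ℂ :=
  ∑ j, (outer (eVec d j) (eVec d j)) ⊗ₖ (outer (eVec d j) (eVec d j))

/-- The projector `Q = Σ_α |â_α⟩⟨â_α| ⊗ |ψ_α⟩⟨ψ_α|`. -/
def Qop (d : ℕ) (lam : Fin d → ℝ) (phi : Fin d → Fin d → ℝ) :
    Matrix (Fin d × Fin d) (Fin d × Fin d) ℂ :=
  ∑ α, (outer (ahat d phi α) (ahat d phi α)) ⊗ₖ
      (outer (psiAlpha d lam phi α) (psiAlpha d lam phi α))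

lemma Pop_apply (d : ℕ) (a b x y : Fin d) :
    Pop d (a,b) (x,y) = if a = b ∧ x = a ∧ y = a then 1 else 0 := by
  simp only [Pop, Matrix.sum_apply, kroneckerMap_apply, outer, vecMulVec_apply, eVec,
    Pi.star_apply, apply_ite star, star_one, star_zero]
  rw [Finset.sum_eq_single a] <;> by_cases h1 : a = b <;> by_cases h2 : x = a <;>
    by_cases h3 : y = a <;> simp_all <;> intro h <;> simp_all [eq_comm]

lemma Qop_diag (d : ℕ) (hd : 1 ≤ d) (lam : Fin d → ℝ) (phi : Fin d → Fin d → ℝ) (a c : Fin d) :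
    Qop d lam phi (a,a) (c,c)
      = ((Real.sqrt (lam a) : ℝ) : ℂ) * ((Real.sqrt (lam c) : ℝ) : ℂ) := by
  have hd0 : (0:ℝ) ≤ d := by positivity
  have hdne : (d:ℝ) ≠ 0 := by positivity
  simp only [Qop, Matrix.sum_apply, kroneckerMap_apply, outer, vecMulVec_apply,
    Pi.star_apply, ahat, psiAlpha, RCLike.star_def, _root_.map_mul, Complex.conj_ofReal,
    ← Complex.exp_conj, Complex.conj_I, map_neg, neg_neg]
  have key : ∀ α : Fin d,
      ((1 / Real.sqrt d : ℝ) : ℂ) * Complex.exp (Complex.I * (phi a α : ℂ)) *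
        (((1 / Real.sqrt d : ℝ) : ℂ) * Complex.exp (-Complex.I * (phi c α : ℂ))) *
        (((Real.sqrt (lam a) : ℝ) : ℂ) * Complex.exp (-Complex.I * (phi a α : ℂ)) *
          (((Real.sqrt (lam c) : ℝ) : ℂ) * Complex.exp (Complex.I * (phi c α : ℂ))))
      = (1/d : ℂ) * (((Real.sqrt (lam a) : ℝ) : ℂ) * ((Real.sqrt (lam c) : ℝ) : ℂ)) := by
    intro α
    have h1 : Complex.exp (Complex.I * (phi a α : ℂ)) * Complex.exp (-Complex.I * (phi a α : ℂ)) = 1 := by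
      rw [← Complex.exp_add]; ring_nf; exact Complex.exp_zero
    have h2 : Complex.exp (-Complex.I * (phi c α : ℂ)) * Complex.exp (Complex.I * (phi c α : ℂ)) = 1 := by
      rw [← Complex.exp_add]; ring_nf; exact Complex.exp_zero
    have h3 : ((1 / Real.sqrt d : ℝ) : ℂ) * ((1 / Real.sqrt d : ℝ) : ℂ) = (1/d : ℂ) := by
      push_cast
      rw [div_mul_div_comm, one_mul, ← Complex.ofReal_mul, Real.mul_self_sqrt hd0]; simp
    calc ((1 / Real.sqrt d : ℝ) : ℂ) * Complex.exp (Complex.I * (phi a α : ℂ)) *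
        (((1 / Real.sqrt d : ℝ) : ℂ) * Complex.exp (-Complex.I * (phi c α : ℂ))) *
        (((Real.sqrt (lam a) : ℝ) : ℂ) * Complex.exp (-Complex.I * (phi a α : ℂ)) *
          (((Real.sqrt (lam c) : ℝ) : ℂ) * Complex.exp (Complex.I * (phi c α : ℂ))))
        = (((1 / Real.sqrt d : ℝ) : ℂ) * ((1 / Real.sqrt d : ℝ) : ℂ)) *
          (((Real.sqrt (lam a) : ℝ) : ℂ) * ((Real.sqrt (lam c) : ℝ) : ℂ)) *
          ((Complex.exp (Complex.I * (phi a α : ℂ)) * Complex.exp (-Complex.I * (phi a α : ℂ))) *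
           (Complex.exp (-Complex.I * (phi c α : ℂ)) * Complex.exp (Complex.I * (phi c α : ℂ)))) := by ring
      _ = (1/d : ℂ) * (((Real.sqrt (lam a) : ℝ) : ℂ) * ((Real.sqrt (lam c) : ℝ) : ℂ)) := by
          rw [h1, h2, h3]; ring
  rw [Finset.sum_congr rfl (fun α _ => key α), Finset.sum_const, Finset.card_univ,
    Fintype.card_fin, nsmul_eq_mul]
  have : (d : ℂ) ≠ 0 := by exact_mod_cast Nat.cast_ne_zero.mpr (by omega)
  field_simp

lemma psiVec_apply (d : ℕ) (lam : Fin d → ℝ) (a b : Fin d) :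
    psiVec d lam (a,b) = if a = b then ((Real.sqrt (lam a) : ℝ) : ℂ) else 0 := by
  simp only [psiVec, Finset.sum_apply, Pi.smul_apply, tensorVec, eVec, smul_eq_mul]
  rw [Finset.sum_eq_single a]
  · by_cases h : a = b <;> simp [h, eq_comm]
  · intro j _ hj; simp [Ne.symm hj]
  · simp


/-- `PQP = |ψ⟩⟨ψ|`. -/
theorem stmt4 (d : ℕ) (hd : 1 ≤ d) (lam : Fin d → ℝ)
    (hlam : ∀ j, 0 ≤ lam j) (hsum : ∑ j, lam j = 1)
    (phi : Fin d → Fin d → ℝ)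
    (hMUB : ∀ α β : Fin d,
      star (ahat d phi α) ⬝ᵥ ahat d phi β = if α = β then 1 else 0) :
    Pop d * Qop d lam phi * Pop d = outer (psiVec d lam) (psiVec d lam) := by
  ext ⟨a, b⟩ ⟨c, f⟩
  rw [Matrix.mul_assoc, Matrix.mul_apply]
  have h2 : (Qop d lam phi * Pop d) (a,a) (c,f)
      = Qop d lam phi (a,a) (c,c) * (if c = f then 1 else 0) := by
    rw [Matrix.mul_apply, Finset.sum_eq_single (c,c)]
    · rw [Pop_apply]
      by_cases h : c = f
      · simp [h]
      · simp [h, Ne.symm h]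
    · rintro ⟨x, y⟩ _ hq
      rw [Pop_apply]
      have hcond : ¬(x = y ∧ c = x ∧ f = x) := by
        rintro ⟨rfl, rfl, rfl⟩; exact hq rfl
      simp [hcond]
    · simp
  have h1 : ∑ p : Fin d × Fin d, Pop d (a,b) p * (Qop d lam phi * Pop d) p (c,f)
      = (if a = b then 1 else 0) * (Qop d lam phi * Pop d) (a,a) (c,f) := by
    rw [Finset.sum_eq_single (a,a)]
    · rw [Pop_apply]; by_cases h : a = b <;> simp [h]
    · rintro ⟨x, y⟩ _ hp
      rw [Pop_apply]
      have hcond : ¬(a = b ∧ x = a ∧ y = a) := by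
        rintro ⟨-, rfl, rfl⟩; exact hp rfl
      simp [hcond]
    · simp
  rw [h1, h2, Qop_diag d hd lam phi a c]
  rw [outer, vecMulVec_apply, Pi.star_apply, psiVec_apply, psiVec_apply]
  by_cases hab : a = b <;> by_cases hcf : c = f <;>
    simp [hab, hcf, RCLike.star_def, Complex.conj_ofReal]
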